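/- At each endpoint of an Arnold tongue the periodic orbit is parabolic: let p/q be rational (p ∈ ℤ, q ≥ 1) and let θ* be either the infimum or the supremum of the set {θ ∈ ℝ : ρ(θ) = p/q} (assumed nonempty). Then there exists x ∈ ℝ such that A_{θ*}^{∘q}(x) = x + p and the derivative of A_{θ*}^{∘q} at x equals 1 (the orbit has eigenvalue one). -/

import Mathlib

/-!
Put `g_θ(x) = A_θ^q(x) - x`, a continuous `1`-periodic function. By the rational case of
Poincaré's theory, `ρ(θ) = p/q` exactly when `g_θ` takes the value `p`; hence the tongue is
compact and contains its endpoints. Moreover `g_θ(x)` is strictly increasing in `θ`. If, at the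
left endpoint `θ*`, some `g_{θ*}(x₁)` exceeded `p`, then for `θ` slightly below `θ*` we would still
have `g_θ(x₁) > p`, while `g_θ(x₂) < p` at a periodic point `x₂` of `A_{θ*}`; the intermediate value
theorem would put `θ` in the tongue. So `g_{θ*} ≤ p` with equality at `x₂`, which is therefore a
maximum of `g_{θ*}`, and `(A_{θ*}^q)'(x₂) = 1` there. The right endpoint is the order dual.
-/

noncomputable def arnoldR (θ : ℝ) (x : ℝ) : ℝ :=
  x + θ + Real.sin (2 * Real.pi * x) / (2 * Real.pi)

open Real Filter Set Topology

section ParameterFamily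

variable {α X β : Type*} [LinearOrder α] [TopologicalSpace α] [OrderTopology α]
  [DenselyOrdered α] [TopologicalSpace X] [PreconnectedSpace X]
  [LinearOrder β] [TopologicalSpace β] [OrderClosedTopology β]
  {G : α → X → β} {c : β} {a₀ : α}

theorem apply_le_of_isLeast_setOf_exists_eq [NoMinOrder α] (hG : ∀ a, Continuous (G a))
    (hG' : ∀ x, Continuous (G · x)) (hmono : ∀ x, StrictMono (G · x))
    (h : IsLeast {a | ∃ x, G a x = c} a₀) (x : X) : G a₀ x ≤ c := by
  obtain ⟨x₀, hx₀⟩ := h.1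
  by_contra! hlt
  have hev : ∀ᶠ a in 𝓝[<] a₀, c < G a x :=
    (((hG' x).tendsto a₀).eventually_const_lt hlt).filter_mono nhdsWithin_le_nhds
  obtain ⟨a, hax, ha : a < a₀⟩ := (hev.and self_mem_nhdsWithin).exists
  have hax₀ : G a x₀ < c := hx₀ ▸ hmono x₀ ha
  obtain ⟨y, hy⟩ := intermediate_value_univ x₀ x (hG a) ⟨hax₀.le, hax.le⟩
  exact (h.2 ⟨y, hy⟩).not_gt ha

theorem le_apply_of_isGreatest_setOf_exists_eq [NoMaxOrder α] (hG : ∀ a, Continuous (G a))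
    (hG' : ∀ x, Continuous (G · x)) (hmono : ∀ x, StrictMono (G · x))
    (h : IsGreatest {a | ∃ x, G a x = c} a₀) (x : X) : c ≤ G a₀ x :=
  apply_le_of_isLeast_setOf_exists_eq (α := αᵒᵈ) (β := βᵒᵈ) hG hG' (fun x => (hmono x).dual) h x

end ParameterFamily

theorem deriv_eq_one_of_isLocalExtr_sub_id {f : ℝ → ℝ} {x : ℝ} (hf : DifferentiableAt ℝ f x)
    (h : IsLocalExtr (fun y => f y - y) x) : deriv f x = 1 := by
  have := h.deriv_eq_zero
  rw [deriv_fun_sub hf differentiableAt_fun_id, deriv_id''] at this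
  linarith

theorem hasDerivAt_arnoldR (θ x : ℝ) : HasDerivAt (arnoldR θ) (1 + cos (2 * π * x)) x := by
  have h := ((hasDerivAt_id' x).add_const θ).fun_add
    ((((hasDerivAt_id' x).const_mul (2 * π)).sin).div_const (2 * π))
  exact h.congr_deriv (by field_simp)

theorem differentiable_arnoldR (θ : ℝ) : Differentiable ℝ (arnoldR θ) :=
  fun x => (hasDerivAt_arnoldR θ x).differentiableAt

theorem monotone_arnoldR (θ : ℝ) : Monotone (arnoldR θ) :=
  monotone_of_deriv_nonneg (differentiable_arnoldR θ) fun x => by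
    rw [(hasDerivAt_arnoldR θ x).deriv]; linarith [neg_one_le_cos (2 * π * x)]

theorem arnoldR_add_one (θ x : ℝ) : arnoldR θ (x + 1) = arnoldR θ x + 1 := by
  simp only [arnoldR, mul_add, mul_one, sin_add_two_pi]
  ring

theorem arnoldR_lt_arnoldR_of_lt {θ θ' : ℝ} (h : θ < θ') (x : ℝ) :
    arnoldR θ x < arnoldR θ' x := by
  simp only [arnoldR]; linarith

theorem strictMono_arnoldR_iterate {n : ℕ} (hn : n ≠ 0) (x : ℝ) :
    StrictMono fun θ => (arnoldR θ)^[n] x := by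
  obtain ⟨n, rfl⟩ := Nat.exists_eq_succ_of_ne_zero hn
  intro θ θ' h
  simp only [Function.iterate_succ_apply']
  calc arnoldR θ ((arnoldR θ)^[n] x)
      ≤ arnoldR θ ((arnoldR θ')^[n] x) := monotone_arnoldR θ <|
        (monotone_arnoldR θ).iterate_le_of_le (fun y => (arnoldR_lt_arnoldR_of_lt h y).le) n x
    _ < arnoldR θ' ((arnoldR θ')^[n] x) := arnoldR_lt_arnoldR_of_lt h _

theorem continuous_uncurry_arnoldR_iterate (n : ℕ) :
    Continuous fun z : ℝ × ℝ => (arnoldR z.1)^[n] z.2 := by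
  induction n with
  | zero => exact continuous_snd
  | succ n ih =>
    simp only [Function.iterate_succ_apply']
    unfold arnoldR
    fun_prop

theorem arnoldR_iterate_sub_periodic (θ : ℝ) (n : ℕ) :
    Function.Periodic (fun x => (arnoldR θ)^[n] x - x) 1 := fun x => by
  have hcomm : Function.Commute (arnoldR θ) (· + 1) := arnoldR_add_one θ
  simp only [hcomm.iterate_left n x]
  ring

theorem abs_arnoldR_sub_sub_le (θ x : ℝ) : |arnoldR θ x - x - θ| ≤ 1 := by
  have h2π : 1 ≤ 2 * π := by linarith [pi_gt_three]
  have h : arnoldR θ x - x - θ = sin (2 * π * x) / (2 * π) := by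
    unfold arnoldR
    ring
  calc |arnoldR θ x - x - θ| = |sin (2 * π * x)| / (2 * π) := by
        rw [h, abs_div, abs_of_pos two_pi_pos]
    _ ≤ 1 := by
        rw [div_le_one two_pi_pos]
        exact (abs_sin_le_one _).trans h2π

noncomputable def arnoldLift (θ : ℝ) : CircleDeg1Lift :=
  ⟨⟨arnoldR θ, monotone_arnoldR θ⟩, arnoldR_add_one θ⟩

@[simp] theorem coe_arnoldLift (θ : ℝ) : ⇑(arnoldLift θ) = arnoldR θ := rfl

theorem abs_translationNumber_arnoldLift_sub_le (θ : ℝ) :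
    |(arnoldLift θ).translationNumber - θ| ≤ 1 := by
  have h x := abs_sub_le_iff.1 (abs_arnoldR_sub_sub_le θ x)
  rw [abs_sub_le_iff]
  constructor
  · linarith [(arnoldLift θ).translationNumber_le_of_le_add (z := θ + 1)
      fun x => by simp only [coe_arnoldLift]; linarith [h x]]
  · linarith [(arnoldLift θ).le_translationNumber_of_add_le (z := θ - 1)
      fun x => by simp only [coe_arnoldLift]; linarith [h x]]

def arnoldTongue (p : ℤ) (q : ℕ) : Set ℝ := {θ | ∃ x, (arnoldR θ)^[q] x - x = p}

theorem translationNumber_arnoldLift_eq_div_iff {p : ℤ} {q : ℕ} (hq : 0 < q) (θ : ℝ) :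
    (arnoldLift θ).translationNumber = p / q ↔ θ ∈ arnoldTongue p q := by
  rw [(arnoldLift θ).translationNumber_eq_rat_iff (differentiable_arnoldR θ).continuous hq,
    CircleDeg1Lift.coe_pow, coe_arnoldLift]
  simp only [arnoldTongue, mem_ofPred_eq, sub_eq_iff_eq_add']

theorem arnoldTongue_subset_Icc (p : ℤ) {q : ℕ} (hq : 0 < q) :
    arnoldTongue p q ⊆ Icc (p / q - 1) (p / q + 1) := fun θ hθ => by
  have h := abs_translationNumber_arnoldLift_sub_le θ
  rw [(translationNumber_arnoldLift_eq_div_iff hq θ).2 hθ, abs_sub_le_iff] at h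
  exact ⟨by linarith, by linarith⟩

theorem isCompact_arnoldTongue (p : ℤ) {q : ℕ} (hq : 0 < q) : IsCompact (arnoldTongue p q) := by
  have hK : IsCompact (Icc (p / q - 1 : ℝ) (p / q + 1) ×ˢ Icc (0 : ℝ) 1 ∩
      {z | (arnoldR z.1)^[q] z.2 - z.2 = p}) :=
    (isCompact_Icc.prod isCompact_Icc).inter_right
      (isClosed_eq ((continuous_uncurry_arnoldR_iterate q).sub continuous_snd) continuous_const)
  convert hK.image continuous_fst
  ext θ
  constructor
  · intro hθ
    obtain ⟨x, hx⟩ := id hθ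
    obtain ⟨y, hy, hxy⟩ := (arnoldR_iterate_sub_periodic θ q).exists_mem_Ico₀ one_pos x
    exact ⟨(θ, y), ⟨⟨arnoldTongue_subset_Icc p hq hθ, Ico_subset_Icc_self hy⟩,
      hxy.symm.trans hx⟩, rfl⟩
  · rintro ⟨⟨θ, y⟩, ⟨-, hy⟩, rfl⟩
    exact ⟨y, hy⟩

/-- At each endpoint of an Arnold tongue the periodic orbit is parabolic: if `θ*` is the
infimum or the supremum of the (nonempty) set `{θ : ρ(θ) = p/q}`, then there is `x ∈ ℝ`
with `A_{θ*}^{∘q}(x) = x + p` and `(A_{θ*}^{∘q})'(x) = 1` (eigenvalue one). -/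
theorem arnold_tongue_endpoints_parabolic (ρ : ℝ → ℝ)
    (hρ : ∀ θ x : ℝ,
      Filter.Tendsto (fun n : ℕ => (arnoldR θ)^[n] x / n) Filter.atTop (nhds (ρ θ)))
    (p : ℤ) (q : ℕ) (hq : 1 ≤ q)
    (hne : {θ : ℝ | ρ θ = (p : ℝ) / (q : ℝ)}.Nonempty)
    (θs : ℝ)
    (hθs : θs = sInf {θ : ℝ | ρ θ = (p : ℝ) / (q : ℝ)} ∨
           θs = sSup {θ : ℝ | ρ θ = (p : ℝ) / (q : ℝ)}) :
    ∃ x : ℝ, (arnoldR θs)^[q] x = x + (p : ℝ) ∧ deriv ((arnoldR θs)^[q]) x = 1 := by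
  have hS : {θ : ℝ | ρ θ = p / q} = arnoldTongue p q := by
    ext θ
    rw [mem_ofPred_eq, ← (arnoldLift θ).translationNumber_eq_of_tendsto₀ (hρ θ 0)]
    exact translationNumber_arnoldLift_eq_div_iff hq θ
  rw [hS] at hne hθs
  have hK := isCompact_arnoldTongue p hq
  have hG θ : Continuous fun x => (arnoldR θ)^[q] x - x :=
    ((differentiable_arnoldR θ).continuous.iterate q).sub continuous_id
  have hG' x : Continuous fun θ => (arnoldR θ)^[q] x - x :=
    ((continuous_uncurry_arnoldR_iterate q).comp (continuous_id.prodMk continuous_const)).sub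
      continuous_const
  have hmono x : StrictMono fun θ => (arnoldR θ)^[q] x - x := fun _ _ h =>
    sub_lt_sub_right (strictMono_arnoldR_iterate (by omega) x h) x
  obtain ⟨⟨x, hx⟩, hextr⟩ : θs ∈ arnoldTongue p q ∧ ∀ x, (arnoldR θs)^[q] x - x = p →
      IsLocalExtr (fun y => (arnoldR θs)^[q] y - y) x := by
    rcases hθs with rfl | rfl
    · have h := hK.isLeast_sInf hne
      refine ⟨h.1, fun x hx => IsMaxFilter.isExtr (Eventually.of_forall fun y => ?_)⟩
      exact (apply_le_of_isLeast_setOf_exists_eq hG hG' hmono h y).trans hx.ge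
    · have h := hK.isGreatest_sSup hne
      refine ⟨h.1, fun x hx => IsMinFilter.isExtr (Eventually.of_forall fun y => ?_)⟩
      exact hx.le.trans (le_apply_of_isGreatest_setOf_exists_eq hG hG' hmono h y)
  exact ⟨x, by linarith, deriv_eq_one_of_isLocalExtr_sub_id
    ((differentiable_arnoldR θs).iterate q x) (hextr x hx)⟩
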